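/- Let G be a finite DAG on vertex set V with level l(G) and level sets V_s, and let pa(V_s) denote the set of vertices having a child in V_s. Then every weighted adjacency matrix W of G satisfies rank(W) ≤ Σ_{s=0}^{l(G)−1} min(|V_s|, |pa(V_s)|). -/

import Mathlib

/-- There is a directed path with `ℓ` edges starting at `X` in the graph with edge
relation `E`. -/
def HasPathFrom {V : Type*} (E : V → V → Prop) (X : V) (ℓ : ℕ) : Prop :=
  ∃ p : Fin (ℓ + 1) → V, p 0 = X ∧ ∀ i : Fin ℓ, E (p i.castSucc) (p i.succ)

/-- The level of a vertex `X`: the number of edges in a longest directed path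
starting at `X`. -/
noncomputable def level {V : Type*} (E : V → V → Prop) (X : V) : ℕ :=
  sSup {ℓ : ℕ | HasPathFrom E X ℓ}

/-- The level of the graph: the number of edges in a longest directed path. -/
noncomputable def glevel {V : Type*} [Fintype V] (E : V → V → Prop) : ℕ :=
  Finset.univ.sup fun X : V => level E X

/-- The set of vertices of level `s`. -/
def levelSet {V : Type*} (E : V → V → Prop) (s : ℕ) : Set V :=
  {X | level E X = s}

section Aux

variable {V : Type*} [Fintype V] {E : V → V → Prop}

omit [Fintype V] in
lemma hasPathFrom_zero (E : V → V → Prop) (X : V) : HasPathFrom E X 0 :=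
  ⟨fun _ => X, rfl, fun i => i.elim0⟩

omit [Fintype V] in
lemma transGen_of_path {ℓ : ℕ} {p : Fin (ℓ + 1) → V}
    (hp : ∀ i : Fin ℓ, E (p i.castSucc) (p i.succ)) :
    ∀ b : ℕ, ∀ a : ℕ, ∀ (hb : b ≤ ℓ) (hab : a < b),
      Relation.TransGen E (p ⟨a, by omega⟩) (p ⟨b, by omega⟩) := by
  intro b
  induction b with
  | zero => omega
  | succ b ih =>
    intro a hb hab
    have hstep : E (p ⟨b, by omega⟩) (p ⟨b + 1, by omega⟩) := by
      have := hp ⟨b, by omega⟩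
      simpa [Fin.castSucc, Fin.succ, Fin.castAdd, Fin.castLE] using this
    rcases Nat.lt_or_ge a b with h | h
    · exact (ih a (by omega) h).tail hstep
    · have : a = b := by omega
      subst this
      exact Relation.TransGen.single hstep

lemma path_len_lt (hacyc : ∀ X : V, ¬ Relation.TransGen E X X)
    {X : V} {ℓ : ℕ} (h : HasPathFrom E X ℓ) : ℓ < Fintype.card V := by
  by_contra hlen
  push_neg at hlen
  obtain ⟨p, -, hp⟩ := h
  obtain ⟨i, j, hne, hij⟩ := Fintype.exists_ne_map_eq_of_card_lt p
    (by simpa [Fintype.card_fin] using Nat.lt_succ_of_le hlen)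
  rcases Ne.lt_or_gt hne with hlt | hlt
  · have := transGen_of_path hp j i (by omega) hlt
    rw [show (⟨(i : ℕ), by omega⟩ : Fin (ℓ + 1)) = i from rfl,
      show (⟨(j : ℕ), by omega⟩ : Fin (ℓ + 1)) = j from rfl, hij] at this
    exact hacyc _ this
  · have := transGen_of_path hp i j (by omega) hlt
    rw [show (⟨(i : ℕ), by omega⟩ : Fin (ℓ + 1)) = i from rfl,
      show (⟨(j : ℕ), by omega⟩ : Fin (ℓ + 1)) = j from rfl, hij] at this
    exact hacyc _ this

lemma bddAbove_path (hacyc : ∀ X : V, ¬ Relation.TransGen E X X) (X : V) :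
    BddAbove {ℓ : ℕ | HasPathFrom E X ℓ} :=
  ⟨Fintype.card V, fun _ h => (path_len_lt hacyc h).le⟩

lemma hasPathFrom_level (hacyc : ∀ X : V, ¬ Relation.TransGen E X X) (X : V) :
    HasPathFrom E X (level E X) := by
  refine Nat.sSup_mem ⟨0, ?_⟩ (bddAbove_path hacyc X)
  exact hasPathFrom_zero E X

lemma level_lt_of_edge (hacyc : ∀ X : V, ¬ Relation.TransGen E X X)
    {X Y : V} (h : E X Y) : level E Y < level E X := by
  obtain ⟨p, hp0, hp⟩ := hasPathFrom_level hacyc Y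
  have hpath : HasPathFrom E X (level E Y + 1) := by
    refine ⟨Fin.cases X p, by simp, ?_⟩
    intro i
    induction i using Fin.cases with
    | zero =>
      simp only [Fin.castSucc_zero, Fin.cases_zero, Fin.cases_succ, hp0]
      exact h
    | succ j =>
      rw [← Fin.succ_castSucc]
      simp only [Fin.cases_succ]
      exact hp j
  have : level E Y + 1 ≤ level E X := le_csSup (bddAbove_path hacyc X) hpath
  omega

lemma level_lt_glevel_of_edge (hacyc : ∀ X : V, ¬ Relation.TransGen E X X)
    {X Y : V} (h : E X Y) : level E Y < glevel E :=
  lt_of_lt_of_le (level_lt_of_edge hacyc h)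
    (Finset.le_sup (Finset.mem_univ X))

open Classical in
lemma rank_le_card_of_col_support {m n : Type*} [Fintype m] [Fintype n]
    (M : Matrix m n ℝ) (S : Finset n) (h : ∀ x y, M x y ≠ 0 → y ∈ S) :
    M.rank ≤ S.card := by
  classical
  have hfac : M = (Matrix.of fun x (y : {y // y ∈ S}) => M x (y : n)) *
      (Matrix.of fun (y : {y // y ∈ S}) y' => if (y : n) = y' then (1 : ℝ) else 0) := by
    ext x y'
    rw [Matrix.mul_apply]
    simp only [Matrix.of_apply, mul_ite, mul_one, mul_zero]
    rw [Finset.sum_coe_sort S (fun y => if y = y' then M x y else 0)]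
    rw [Finset.sum_ite_eq' S y' (fun y => M x y)]
    by_cases hy : y' ∈ S
    · simp [hy]
    · simp only [hy, if_false]
      by_contra hne
      exact hy (h x y' hne)
  calc M.rank ≤ (Matrix.of fun x (y : {y // y ∈ S}) => M x (y : n)).rank := by
        conv_lhs => rw [hfac]
        exact Matrix.rank_mul_le_left _ _
    _ ≤ Fintype.card {y // y ∈ S} := Matrix.rank_le_card_width _
    _ = S.card := Fintype.card_coe S

lemma rank_le_card_of_row_support {m n : Type*} [Fintype m] [Fintype n]
    (M : Matrix m n ℝ) (S : Finset m) (h : ∀ x y, M x y ≠ 0 → x ∈ S) :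
    M.rank ≤ S.card := by
  rw [← Matrix.rank_transpose]
  exact rank_le_card_of_col_support M.transpose S (fun x y hxy => h y x hxy)

lemma matrix_rank_sum_le {m n ι : Type*} [Fintype m] [Fintype n]
    (s : Finset ι) (f : ι → Matrix m n ℝ) :
    (∑ i ∈ s, f i).rank ≤ ∑ i ∈ s, (f i).rank := by
  classical
  have hadd : ∀ A B : Matrix m n ℝ, (A + B).rank ≤ A.rank + B.rank := by
    intro A B
    rw [Matrix.rank, Matrix.rank, Matrix.rank, Matrix.mulVecLin_add]
    have hle : LinearMap.range (A.mulVecLin + B.mulVecLin) ≤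
        LinearMap.range A.mulVecLin ⊔ LinearMap.range B.mulVecLin := by
      rintro x ⟨y, rfl⟩
      exact Submodule.add_mem_sup ⟨y, rfl⟩ ⟨y, rfl⟩
    exact (Submodule.finrank_mono hle).trans
      (Submodule.finrank_add_le_finrank_add_finrank _ _)
  induction s using Finset.induction with
  | empty => simp
  | insert _ _ hni ih =>
    rw [Finset.sum_insert hni, Finset.sum_insert hni]
    exact (hadd _ _).trans (add_le_add_right ih _)

end Aux

/-- Every weighted adjacency matrix of a finite DAG has rank at most
`∑_{s=0}^{l(G)-1} min(|V_s|, |pa(V_s)|)`. -/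
theorem rank_le_sum_min_level_parents
    {V : Type*} [Fintype V] [DecidableEq V] (E : V → V → Prop)
    (hacyc : ∀ X : V, ¬ Relation.TransGen E X X)
    (W : Matrix V V ℝ) (hW : ∀ X Y : V, W X Y ≠ 0 ↔ E X Y) :
    W.rank ≤ ∑ s ∈ Finset.range (glevel E),
      min (levelSet E s).ncard {X : V | ∃ Y ∈ levelSet E s, E X Y}.ncard := by
  classical
  set g := glevel E with hg
  set Ws : ℕ → Matrix V V ℝ := fun s => Matrix.of fun X Y =>
    if level E Y = s then W X Y else 0 with hWs
  have hdecomp : W = ∑ s ∈ Finset.range g, Ws s := by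
    ext X Y
    rw [Matrix.sum_apply]
    simp only [hWs, Matrix.of_apply]
    rw [Finset.sum_ite_eq (Finset.range g) (level E Y) (fun _ => W X Y)]
    by_cases hy : level E Y ∈ Finset.range g
    · simp [hy]
    · simp only [hy, if_false]
      by_contra hne
      exact hy (Finset.mem_range.mpr
        (level_lt_glevel_of_edge hacyc ((hW X Y).mp (fun h0 => hne h0))))
  calc W.rank = (∑ s ∈ Finset.range g, Ws s).rank := by rw [← hdecomp]
    _ ≤ ∑ s ∈ Finset.range g, (Ws s).rank := matrix_rank_sum_le _ _
    _ ≤ ∑ s ∈ Finset.range g,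
        min (levelSet E s).ncard {X : V | ∃ Y ∈ levelSet E s, E X Y}.ncard := by
      refine Finset.sum_le_sum fun s _ => ?_
      refine le_min ?_ ?_
      · rw [Set.ncard_eq_toFinset_card']
        refine rank_le_card_of_col_support (Ws s) (levelSet E s).toFinset ?_
        intro X Y hne
        simp only [hWs, Matrix.of_apply, ne_eq, ite_eq_right_iff, not_forall] at hne
        exact Set.mem_toFinset.mpr hne.1
      · rw [Set.ncard_eq_toFinset_card']
        refine rank_le_card_of_row_support (Ws s) {X : V | ∃ Y ∈ levelSet E s, E X Y}.toFinset ?_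
        intro X Y hne
        simp only [hWs, Matrix.of_apply, ne_eq, ite_eq_right_iff, not_forall] at hne
        exact Set.mem_toFinset.mpr ⟨Y, hne.1, (hW X Y).mp hne.2⟩
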